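/- arXiv:2104.05445 — 4 statements merged into one kernel-verified Lean document; each statement's English description precedes it below -/
import Mathlib

section
/- Fix t ∈ ℝ with −2 < t < 2 and t ≠ 0. The matrix X(t) with rows (1, −t/2, −t/2), (−t/2, 1, t²/2 − 1), (−t/2, t²/2 − 1, 1) is positive semidefinite and attains the minimum of t·x + t·y + z over all (x,y,z) such that the symmetric matrix [[1,x,y],[x,1,z],[y,z,1]] is positive semidefinite. -/
/-- For `t ∈ (−2,2) \ {0}`, the matrix `X(t)` is PSD and minimizes
`t x + t y + z` over the Cayley spectrahedron. -/
theorem stmt_12 (t : ℝ) (ht1 : -2 < t) (ht2 : t < 2) (ht0 : t ≠ 0) :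
    (!![1, -t/2, -t/2; -t/2, 1, t^2/2 - 1; -t/2, t^2/2 - 1, 1] :
        Matrix (Fin 3) (Fin 3) ℝ).PosSemidef ∧
      ∀ x y z : ℝ,
        (!![1, x, y; x, 1, z; y, z, 1] : Matrix (Fin 3) (Fin 3) ℝ).PosSemidef →
          t * (-t/2) + t * (-t/2) + (t^2/2 - 1) ≤ t * x + t * y + z := by
  constructor
  · rw [Matrix.posSemidef_iff_dotProduct_mulVec]
    constructor
    · ext i j
      fin_cases i <;> fin_cases j <;>
        simp [Matrix.conjTranspose_apply, Matrix.vecHead, Matrix.vecTail]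
    · intro v
      simp only [Matrix.mulVec, dotProduct, Fin.sum_univ_three, Pi.star_apply,
        star_trivial, Matrix.cons_val', Matrix.cons_val_zero, Matrix.cons_val_one,
        Matrix.head_cons, Matrix.empty_val', Matrix.cons_val_fin_one, Matrix.head_fin_const,
        Matrix.of_apply, Matrix.cons_val_two, Matrix.tail_cons]
      nlinarith [sq_nonneg (v 0 - t*(v 1 + v 2)/2),
        mul_nonneg (mul_nonneg (by linarith : (0:ℝ) ≤ 2 - t) (by linarith : (0:ℝ) ≤ 2 + t))
          (sq_nonneg (v 1 - v 2))]
  · intro x y z h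
    have h2 := (Matrix.posSemidef_iff_dotProduct_mulVec.mp h).2 ![t, 1, 1]
    simp only [Matrix.mulVec, dotProduct, Fin.sum_univ_three, Pi.star_apply,
      star_trivial, Matrix.cons_val', Matrix.cons_val_zero, Matrix.cons_val_one,
      Matrix.head_cons, Matrix.empty_val', Matrix.cons_val_fin_one, Matrix.head_fin_const,
      Matrix.of_apply, Matrix.cons_val_two, Matrix.tail_cons] at h2
    nlinarith [h2]
end

section
/- For all (x,y,z) with [[1,x,y],[x,1,z],[y,z,1]] positive semidefinite and t ∈ (−3,−2], one has t x + t y + z ≥ 2t + 1, with equality at (x,y,z) = (1,1,1); moreover (1,1,1) is the unique minimizer for t ∈ (−3,−2). -/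
lemma quad_of_psd {x y z : ℝ}
    (h : (!![1, x, y; x, 1, z; y, z, 1] : Matrix (Fin 3) (Fin 3) ℝ).PosSemidef)
    (a b c : ℝ) :
    0 ≤ a^2 + b^2 + c^2 + 2*a*b*x + 2*a*c*y + 2*b*c*z := by
  have := h.dotProduct_mulVec_nonneg ![a, b, c]
  simp [dotProduct, Matrix.mulVec, Fin.sum_univ_three] at this
  nlinarith [this]

/-- For `t ∈ (−3,−2]` and any `(x,y,z)` in the Cayley spectrahedron,
`t x + t y + z ≥ 2t + 1`, with equality at the feasible point `(1,1,1)`;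
moreover `(1,1,1)` is the unique minimizer for `t ∈ (−3,−2)`. -/
theorem stmt_14 (t : ℝ) (ht1 : -3 < t) (ht2 : t ≤ -2) :
    (∀ x y z : ℝ,
        (!![1, x, y; x, 1, z; y, z, 1] : Matrix (Fin 3) (Fin 3) ℝ).PosSemidef →
          2 * t + 1 ≤ t * x + t * y + z) ∧
      (!![1, 1, 1; 1, 1, 1; 1, 1, 1] : Matrix (Fin 3) (Fin 3) ℝ).PosSemidef ∧
      t * 1 + t * 1 + 1 = 2 * t + 1 ∧
      (t < -2 → ∀ x y z : ℝ,
        (!![1, x, y; x, 1, z; y, z, 1] : Matrix (Fin 3) (Fin 3) ℝ).PosSemidef →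
          t * x + t * y + z = 2 * t + 1 → (x, y, z) = (1, 1, 1)) := by
  refine ⟨?_, ?_, by ring, ?_⟩
  · intro x y z hM
    have h1 := quad_of_psd hM 1 (-1) 0
    have h2 := quad_of_psd hM 1 0 (-1)
    have h3 := quad_of_psd hM (-2) 1 1
    nlinarith [h1, h2, h3, mul_nonneg (neg_nonneg.2 (by linarith : t + 2 ≤ 0))
      (by nlinarith : (0:ℝ) ≤ 2 - x - y)]
  · rw [Matrix.posSemidef_iff_dotProduct_mulVec]
    constructor
    · ext i j
      fin_cases i <;> fin_cases j <;> rfl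
    · intro v
      have : dotProduct (star v)
            ((!![1, 1, 1; 1, 1, 1; 1, 1, 1] : Matrix (Fin 3) (Fin 3) ℝ).mulVec v)
          = (v 0 + v 1 + v 2)^2 := by
        simp [dotProduct, Matrix.mulVec, Fin.sum_univ_three]
        ring
      rw [this]
      positivity
  · intro htlt x y z hM heq
    have h1 := quad_of_psd hM 1 (-1) 0
    have h2 := quad_of_psd hM 1 0 (-1)
    have h3 := quad_of_psd hM (-2) 1 1
    have hx1 : x ≤ 1 := by nlinarith
    have hy1 : y ≤ 1 := by nlinarith
    have hs : x + y = 2 := by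
      by_contra h
      have hlt : x + y < 2 := lt_of_le_of_ne (by linarith) h
      have := mul_pos (by linarith : (0:ℝ) < -(t+2)) (by linarith : (0:ℝ) < 2 - x - y)
      nlinarith
    have hx : x = 1 := by linarith
    have hy : y = 1 := by linarith
    have hz : z = 1 := by nlinarith
    simp [hx, hy, hz]
end

section
/- The function t ↦ X(t), where X(t) = matrix with entries X₁₁=1, X₁₂=X₁₃=−t/2, X₂₂=X₃₃=1, X₂₃=t²/2−1 for t > −2 and X(t) = all-ones 3×3 matrix for t ≤ −2, is continuous on ℝ but not differentiable at t = −2. -/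
open Classical in
/-- The optimal solution trajectory: the all-ones matrix for `t ≤ −2` and the
parabolic branch for `t > −2`. -/
noncomputable def Xtraj (t : ℝ) : Matrix (Fin 3) (Fin 3) ℝ :=
  if t ≤ -2 then !![1, 1, 1; 1, 1, 1; 1, 1, 1]
  else !![1, -t/2, -t/2; -t/2, 1, t^2/2 - 1; -t/2, t^2/2 - 1, 1]

lemma Xtraj_entry_cont (i j : Fin 3) : Continuous fun t : ℝ => Xtraj t i j := by
  have : (fun t : ℝ => Xtraj t i j) = fun t : ℝ =>
      if t ≤ -2 then (!![(1:ℝ), 1, 1; 1, 1, 1; 1, 1, 1]) i j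
      else (!![1, -t/2, -t/2; -t/2, 1, t^2/2 - 1; -t/2, t^2/2 - 1, 1]) i j := by
    funext t; simp [Xtraj, apply_ite (fun M : Matrix (Fin 3) (Fin 3) ℝ => M i j)]
  rw [this]
  apply Continuous.if_le
  · exact continuous_const
  · fin_cases i <;> fin_cases j <;>
      simp [Matrix.cons_val_zero, Matrix.cons_val_one, Matrix.head_cons,
        Matrix.cons_val_succ, Matrix.vecHead, Matrix.vecTail] <;> fun_prop
  · exact continuous_id
  · exact continuous_const
  · intro t ht
    subst ht
    fin_cases i <;> fin_cases j <;> norm_num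

lemma Xtraj_12 (t : ℝ) : Xtraj t 1 2 = if t ≤ -2 then 1 else t^2/2 - 1 := by
  simp [Xtraj, apply_ite (fun M : Matrix (Fin 3) (Fin 3) ℝ => M 1 2)]

/-- `t ↦ X(t)` is continuous on `ℝ` but not differentiable at `t = −2`
(i.e. not all of its entries are differentiable there). -/
theorem stmt_15 :
    Continuous Xtraj ∧
      ¬ ∀ i j : Fin 3, DifferentiableAt ℝ (fun t : ℝ => Xtraj t i j) (-2) := by
  constructor
  · exact continuous_matrix Xtraj_entry_cont
  · intro h
    have hd := (h 1 2).hasDerivAt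
    set d := deriv (fun t : ℝ => Xtraj t 1 2) (-2) with hdd
    -- left: function is constant 1 on Iic (-2)
    have hleft : HasDerivWithinAt (fun t : ℝ => Xtraj t 1 2) d (Set.Iic (-2)) (-2) :=
      hd.hasDerivWithinAt
    have hconst : HasDerivWithinAt (fun _ : ℝ => (1:ℝ)) 0 (Set.Iic (-2)) (-2) :=
      (hasDerivWithinAt_const _ _ _)
    have hcongr : HasDerivWithinAt (fun _ : ℝ => (1:ℝ)) d (Set.Iic (-2)) (-2) := by
      apply hleft.congr
      · intro x hx; simp [Xtraj_12, Set.mem_Iic.mp hx]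
      · simp [Xtraj_12]
    have hud : UniqueDiffWithinAt ℝ (Set.Iic (-2:ℝ)) (-2) :=
      uniqueDiffOn_Iic (-2:ℝ) _ Set.self_mem_Iic
    have hzero : d = 0 :=
      (hcongr.derivWithin hud).symm.trans (hconst.derivWithin hud)
    -- right: function equals t^2/2 - 1 on Ici (-2)
    have hright : HasDerivWithinAt (fun t : ℝ => Xtraj t 1 2) d (Set.Ici (-2)) (-2) :=
      hd.hasDerivWithinAt
    have hg : HasDerivWithinAt (fun t : ℝ => t^2/2 - 1) (-2) (Set.Ici (-2:ℝ)) (-2) := by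
      have h := (((hasDerivAt_id (-2:ℝ)).pow 2).div_const 2).sub_const 1
      have h' : HasDerivAt (fun t : ℝ => t^2/2 - 1) (-2) (-2) := by
        convert h using 1
        · rfl
        · rfl
        · funext t; simp
        · norm_num
      exact h'.hasDerivWithinAt
    have hcongr2 : HasDerivWithinAt (fun t : ℝ => t^2/2 - 1) d (Set.Ici (-2)) (-2) := by
      apply hright.congr
      · intro x hx
        rcases eq_or_lt_of_le (Set.mem_Ici.mp hx) with h | h
        · rw [← h]; norm_num [Xtraj_12]
        · rw [Xtraj_12, if_neg (not_le.mpr h)]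
      · norm_num [Xtraj_12]
    have hud2 : UniqueDiffWithinAt ℝ (Set.Ici (-2:ℝ)) (-2) := uniqueDiffOn_Ici (-2:ℝ) _ Set.self_mem_Ici
    have : d = -2 :=
      (hcongr2.derivWithin hud2).symm.trans (hg.derivWithin hud2)
    rw [hzero] at this; norm_num at this
end

section
/- Let h(t) = t·sin²(π/t) for t > 0 and h(t) = 0 for t ≤ 0, and define the set-valued map F(t) = [−h(t), h(t)] ⊆ ℝ. Then F is Painlevé–Kuratowski continuous at every t ∈ ℝ, F(1/k) = {0} for every positive integer k, F(t) is a nondegenerate interval for t ∈ (1/(k+1), 1/k), and t = 0 is an accumulation point of the set {1/k : k ∈ ℕ} of times at which F changes from single-valued to multi-valued. -/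
open Filter

/-- The Painlevé–Kuratowski inner limit of a set-valued map at a point. -/
def innerLim {T X : Type*} [MetricSpace T] [MetricSpace X]
    (F : T → Set X) (t0 : T) : Set X :=
  {x | ∀ tk : ℕ → T, Tendsto tk atTop (nhds t0) →
    ∃ xk : ℕ → X, (∀ k, xk k ∈ F (tk k)) ∧ Tendsto xk atTop (nhds x)}

/-- The Painlevé–Kuratowski outer limit of a set-valued map at a point. -/
def outerLim {T X : Type*} [MetricSpace T] [MetricSpace X]
    (F : T → Set X) (t0 : T) : Set X :=
  {x | ∃ tk : ℕ → T, Tendsto tk atTop (nhds t0) ∧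
    ∃ xk : ℕ → X, (∀ k, xk k ∈ F (tk k)) ∧ Tendsto xk atTop (nhds x)}

/-- `h(t) = t sin²(π/t)` for `t > 0` and `0` otherwise. -/
noncomputable def hfun (t : ℝ) : ℝ :=
  if 0 < t then t * Real.sin (Real.pi / t) ^ 2 else 0

/-- `F(t) = [−h(t), h(t)]`. -/
noncomputable def Fmap (t : ℝ) : Set ℝ := Set.Icc (-(hfun t)) (hfun t)


lemma hfun_nonneg (t : ℝ) : 0 ≤ hfun t := by
  unfold hfun
  split
  · positivity
  · exact le_refl 0

lemma hfun_le_abs (t : ℝ) : hfun t ≤ |t| := by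
  unfold hfun
  split
  · rename_i ht
    rw [abs_of_pos ht]
    nlinarith [Real.sin_sq_le_one (Real.pi / t)]
  · positivity

lemma hfun_continuous : Continuous hfun := by
  rw [continuous_iff_continuousAt]
  intro t
  rcases lt_trichotomy t 0 with ht | ht | ht
  · have : (fun s : ℝ => (0:ℝ)) =ᶠ[nhds t] hfun := by
      filter_upwards [eventually_lt_nhds ht] with s hs
      simp [hfun, not_lt.2 hs.le]
    exact continuousAt_const.congr this
  · subst ht
    rw [ContinuousAt]
    rw [show hfun 0 = 0 by simp [hfun]]
    apply squeeze_zero hfun_nonneg hfun_le_abs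
    simpa using (continuous_abs.tendsto (0:ℝ))
  · have hc : ContinuousAt (fun s : ℝ => s * Real.sin (Real.pi / s) ^ 2) t := by
      exact continuousAt_id.mul
        (((Real.continuous_sin.continuousAt).comp
          (continuousAt_const.div continuousAt_id ht.ne')).pow 2)
    apply hc.congr
    filter_upwards [eventually_gt_nhds ht] with s hs
    simp [hfun, hs]

/-- `F` is Painlevé–Kuratowski continuous everywhere, `F(1/k) = {0}`, `F` is a
nondegenerate interval on each `(1/(k+1), 1/k)`, and `0` is an accumulation point
of the set `{1/k : k ∈ ℕ, k > 0}` of times where `F` switches from single- to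
multi-valued. -/
theorem stmt_19 :
    (∀ t : ℝ, Fmap t ⊆ innerLim Fmap t ∧ outerLim Fmap t ⊆ Fmap t) ∧
      (∀ k : ℕ, 0 < k → Fmap (1 / (k : ℝ)) = {0}) ∧
      (∀ k : ℕ, 0 < k → ∀ t ∈ Set.Ioo (1 / ((k : ℝ) + 1)) (1 / (k : ℝ)), 0 < hfun t) ∧
      (0 : ℝ) ∈ closure {x : ℝ | ∃ k : ℕ, 0 < k ∧ x = 1 / (k : ℝ)} ∧
      (0 : ℝ) ∉ {x : ℝ | ∃ k : ℕ, 0 < k ∧ x = 1 / (k : ℝ)} := by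

  refine ⟨?_, ?_, ?_, ?_, ?_⟩
  · intro t
    constructor
    · intro x hx tk htk
      have hxm : -(hfun t) ≤ x ∧ x ≤ hfun t := hx
      refine ⟨fun k => max (-(hfun (tk k))) (min (hfun (tk k)) x), fun k => ?_, ?_⟩
      · constructor
        · exact le_max_left _ _
        · exact max_le (neg_le_self (hfun_nonneg _)) (min_le_left _ _)
      · have hh : Tendsto (fun k => hfun (tk k)) atTop (nhds (hfun t)) :=
          (hfun_continuous.continuousAt.tendsto).comp htk
        have := (hh.neg).max (hh.min (tendsto_const_nhds (x := x)))
        rwa [min_eq_right hxm.2, max_eq_right hxm.1] at this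
    · rintro x ⟨tk, htk, xk, hxk, hxlim⟩
      have hh : Tendsto (fun k => hfun (tk k)) atTop (nhds (hfun t)) :=
        (hfun_continuous.continuousAt.tendsto).comp htk
      constructor
      · exact le_of_tendsto_of_tendsto' hh.neg hxlim fun k => (hxk k).1
      · exact le_of_tendsto_of_tendsto' hxlim hh fun k => (hxk k).2
  · intro k hk
    have hk0 : (0:ℝ) < (k:ℝ) := by exact_mod_cast hk
    have h0 : hfun (1 / (k:ℝ)) = 0 := by
      unfold hfun
      rw [if_pos (by positivity)]
      rw [show Real.pi / (1 / (k:ℝ)) = (k:ℕ) * Real.pi by field_simp,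
        Real.sin_nat_mul_pi]
      ring
    rw [Fmap, h0, neg_zero, Set.Icc_self]
  · intro k hk t ht
    have hk0 : (0:ℝ) < (k:ℝ) := by exact_mod_cast hk
    have ht0 : 0 < t := lt_trans (by positivity) ht.1
    have h1 : (k:ℝ) < 1 / t := by
      rw [lt_div_iff₀ ht0]
      calc (k:ℝ) * t < (k:ℝ) * (1 / (k:ℝ)) := by
            apply mul_lt_mul_of_pos_left ht.2 hk0
        _ = 1 := by field_simp
    have h2 : 1 / t < (k:ℝ) + 1 := by
      rw [div_lt_iff₀ ht0]
      have := ht.1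
      rw [div_lt_iff₀ (by positivity : (0:ℝ) < (k:ℝ)+1)] at this
      linarith [mul_comm t ((k:ℝ)+1)]
    have hsin : Real.sin (Real.pi / t) ≠ 0 := by
      intro hcontra
      rw [Real.sin_eq_zero_iff] at hcontra
      obtain ⟨n, hn⟩ := hcontra
      have hpit : Real.pi / t = Real.pi * (1 / t) := by ring
      have hn' : (n:ℝ) = 1 / t := by
        have hpi := Real.pi_pos
        have : (n:ℝ) * Real.pi = Real.pi * (1 / t) := by rw [hn, hpit]
        nlinarith
      have hlt : (k:ℝ) < (n:ℝ) := by rw [hn']; exact h1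
      have hlt2 : (n:ℝ) < (k:ℝ) + 1 := by rw [hn']; exact h2
      have : (k:ℤ) < n := by exact_mod_cast hlt
      have : (n:ℝ) ≥ (k:ℝ) + 1 := by exact_mod_cast this
      linarith
    have hsq : 0 < Real.sin (Real.pi / t) ^ 2 :=
      lt_of_le_of_ne (sq_nonneg _) (Ne.symm (pow_ne_zero 2 hsin))
    unfold hfun
    rw [if_pos ht0]
    exact mul_pos ht0 hsq
  · apply mem_closure_of_tendsto tendsto_one_div_atTop_nhds_zero_nat
    filter_upwards [eventually_ge_atTop 1] with n hn
    exact ⟨n, hn, rfl⟩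
  · rintro ⟨k, hk, hk0⟩
    have : (0:ℝ) < (k:ℝ) := by exact_mod_cast hk
    have : (1:ℝ) / (k:ℝ) ≠ 0 := one_div_ne_zero this.ne'
    exact this hk0.symm
end
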